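/- arXiv:1507.00456 — 2 statements merged into one kernel-verified Lean document; each statement's English description precedes it below -/
import Mathlib

section
/- Let T be a triangulated category with all set-indexed coproducts and let L be a full triangulated subcategory of T closed under coproducts. Then L is closed under direct summands. -/
/-!
Eilenberg swindle. Put `A = ∐ₙ X` and `B = ∐ₙ Y` over `n : ℕ`. Then `A ⊞ B ≅ ∐ₙ (X ⊞ Y)` lies in
`L`, and since `X ⊞ A ≅ A` also `(A ⊞ B) ⊞ X ≅ A ⊞ B` lies in `L`. The split triangle
`A ⊞ B ⟶ (A ⊞ B) ⊞ X ⟶ X ⟶ (A ⊞ B)⟦1⟧` then puts `X` in `L`.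
-/

open CategoryTheory Limits Pretriangulated

universe w v u

namespace CategoryTheory.Limits

variable {C : Type*} [Category C] [HasZeroMorphisms C]

noncomputable def sigmaBiprodIso [HasBinaryBiproducts C] {ι : Type*} (f g : ι → C)
    [HasCoproduct f] [HasCoproduct g] [HasCoproduct fun i => f i ⊞ g i] :
    (∐ fun i => f i ⊞ g i) ≅ ∐ f ⊞ ∐ g where
  hom := Sigma.desc fun i => biprod.map (Sigma.ι f i) (Sigma.ι g i)
  inv := biprod.desc (Sigma.map fun _ => biprod.inl) (Sigma.map fun _ => biprod.inr)

noncomputable def sigmaULiftNatIso (f : ULift.{w} ℕ → C) [HasCoproduct f]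
    [HasCoproduct fun n : ULift.{w} ℕ => f ⟨n.down + 1⟩]
    [HasBinaryBiproduct (f ⟨0⟩) (∐ fun n : ULift.{w} ℕ => f ⟨n.down + 1⟩)] :
    ∐ f ≅ f ⟨0⟩ ⊞ ∐ fun n : ULift.{w} ℕ => f ⟨n.down + 1⟩ where
  hom := Sigma.desc fun
    | ⟨0⟩ => biprod.inl
    | ⟨n + 1⟩ => Sigma.ι (fun n : ULift.{w} ℕ => f ⟨n.down + 1⟩) ⟨n⟩ ≫ biprod.inr
  inv := biprod.desc (Sigma.ι f ⟨0⟩) (Sigma.desc fun n => Sigma.ι f ⟨n.down + 1⟩)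
  hom_inv_id := by
    ext ⟨_ | n⟩ <;> simp
  inv_hom_id := by
    ext ⟨n⟩ <;> simp

end CategoryTheory.Limits

namespace CategoryTheory.ObjectProperty

variable {C : Type*} [Category C] [HasZeroObject C] [Preadditive C] [HasShift C ℤ]
  [∀ n : ℤ, (shiftFunctor C n).Additive] [Pretriangulated C] (P : ObjectProperty C)
  [P.IsTriangulatedClosed₃] [P.IsClosedUnderIsomorphisms]

lemma prop_right_of_biprod {A X : C} [HasBinaryBiproduct A X] (hA : P A) (h : P (A ⊞ X)) :
    P X :=
  P.ext_of_isTriangulatedClosed₃ _ (binaryBiproductTriangle_distinguished A X) hA h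

end CategoryTheory.ObjectProperty

/-- A full triangulated subcategory of a triangulated category with all (set-indexed)
coproducts which is closed under coproducts is closed under direct summands. -/
theorem stmt3 {T : Type u} [Category.{v} T] [HasZeroObject T] [Preadditive T]
    [HasShift T ℤ] [∀ n : ℤ, (shiftFunctor T n).Additive] [Pretriangulated T]
    [HasCoproducts.{v} T] [HasBinaryBiproducts T]
    (L : ObjectProperty T) [L.IsTriangulated] [L.IsClosedUnderIsomorphisms]
    (hL : ∀ (ι : Type v) (f : ι → T), (∀ i, L (f i)) → L (∐ f))
    (X Y : T) (h : L (X ⊞ Y)) : L X := by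
  let A := ∐ fun _ : ULift.{v} ℕ => X
  let B := ∐ fun _ : ULift.{v} ℕ => Y
  have hAB : L (A ⊞ B) := L.prop_of_iso (sigmaBiprodIso _ _) (hL _ _ fun _ => h)
  have swindle : (A ⊞ B) ⊞ X ≅ A ⊞ B :=
    biprod.braiding _ _ ≪≫ (biprod.associator X A B).symm ≪≫
      biprod.mapIso (sigmaULiftNatIso fun _ => X).symm (Iso.refl B)
  exact L.prop_right_of_biprod hAB (L.prop_of_iso swindle.symm hAB)
end

section
/- Let T be a triangulated category with coproducts, S a localizing subcategory whose inclusion has a right adjoint, and S' a localizing subcategory with S' ⊆ S^⊥ such that the smallest localizing subcategory containing S ∪ S' is all of T. Then S^⊥ = S', and in particular every object X of T fits in a triangle X' → X → X'' → ΣX' with X' ∈ S and X'' ∈ S'. -/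
/-!
Every object `X` has a triangle `X' ⟶ X ⟶ X'' ⟶ X'⟦1⟧` with `X' ∈ S` and `X'' ∈ S^⊥`, built
from the counit of the adjunction, and `X ⟶ X''` is then `S^⊥`-local: precomposition with it
is bijective on maps into objects of `S^⊥`. Local maps into `S^⊥` are unique up to isomorphism,
so `X` admits such a triangle with `X'' ∈ S'` iff it has a local map to an object of `S'`.
Local maps are stable under coproducts and, by the five lemma for `Hom(-, Y)`, under cones; hence
these objects form a localizing subcategory containing `S ∪ S'`, i.e. all of `T`. For `Y ∈ S^⊥`
the map `Y ⟶ Y''` is a local map between objects of `S^⊥`, hence an isomorphism, so `Y ∈ S'`.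
-/

open CategoryTheory Limits Pretriangulated

universe v u

def IsLocalizingSet {T : Type u} [Category.{v} T] [HasZeroObject T] [Preadditive T]
    [HasShift T ℤ] [∀ n : ℤ, (shiftFunctor T n).Additive] [Pretriangulated T]
    (L : Set T) : Prop :=
  (∃ Z ∈ L, IsZero Z) ∧
  (∀ ⦃X Y : T⦄, Nonempty (X ≅ Y) → X ∈ L → Y ∈ L) ∧
  (∀ X ∈ L, ∀ n : ℤ, X⟦n⟧ ∈ L) ∧
  (∀ D ∈ distTriang T, D.obj₁ ∈ L → D.obj₂ ∈ L → D.obj₃ ∈ L) ∧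
  (∀ (ι : Type v) (g : ι → T) (c : Cofan g), IsColimit c → (∀ i, g i ∈ L) → c.pt ∈ L)

namespace CategoryTheory

namespace ObjectProperty

section Shift

variable {C : Type*} [Category* C] {A : Type*} [AddGroup A] [HasShift C A]
  {Q : ObjectProperty C} [Q.IsStableUnderShift A]

lemma isLocal.shift {X Y : C} {f : X ⟶ Y} (hf : Q.isLocal f) (a : A) : Q.isLocal (f⟦a⟧') := by
  intro Z hZ
  let adj := (shiftEquiv C a).toAdjunction
  have : (fun t : Y⟦a⟧ ⟶ Z => f⟦a⟧' ≫ t) =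
      (adj.homEquiv X Z).symm ∘ (f ≫ ·) ∘ adj.homEquiv Y Z := by
    funext t
    have := adj.homEquiv_naturality_left_symm f (adj.homEquiv Y Z t)
    erw [Equiv.symm_apply_apply] at this
    exact this.symm
  rw [this]
  exact (adj.homEquiv X Z).symm.bijective.comp
    ((hf _ (Q.le_shift (-a) _ hZ)).comp (adj.homEquiv Y Z).bijective)

lemma isColocal.shift {X Y : C} {f : X ⟶ Y} (hf : Q.isColocal f) (a : A) :
    Q.isColocal (f⟦a⟧') := by
  intro W hW
  let adj := (shiftEquiv C a).symm.toAdjunction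
  have : (fun t : W ⟶ X⟦a⟧ => t ≫ f⟦a⟧') =
      adj.homEquiv W Y ∘ (· ≫ f) ∘ (adj.homEquiv W X).symm := by
    funext t
    have := adj.homEquiv_naturality_right ((adj.homEquiv W X).symm t) f
    erw [Equiv.apply_symm_apply] at this
    exact this.symm
  rw [this]
  exact (adj.homEquiv W Y).bijective.comp
    ((hf _ (Q.le_shift (-a) _ hW)).comp (adj.homEquiv W X).symm.bijective)

end Shift

section

variable {C : Type*} [Category* C] {Q : ObjectProperty C}

lemma isLocal.nonempty_iso {X Z₁ Z₂ : C} {π₁ : X ⟶ Z₁} {π₂ : X ⟶ Z₂}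
    (h₁ : Q.isLocal π₁) (h₂ : Q.isLocal π₂) (hZ₁ : Q Z₁) (hZ₂ : Q Z₂) : Nonempty (Z₁ ≅ Z₂) := by
  obtain ⟨l, hl⟩ := (h₁ Z₂ hZ₂).2 π₂
  have : Q.isLocal l := Q.isLocal.of_precomp π₁ l h₁ (by simpa only [hl] using h₂)
  have := (Q.isLocal_iff_isIso l hZ₁ hZ₂).1 this
  exact ⟨asIso l⟩

lemma isLocal_sigmaMap {ι : Type*} {X Z : ι → C} [HasCoproduct X] [HasCoproduct Z]
    (π : ∀ i, X i ⟶ Z i) (h : ∀ i, Q.isLocal (π i)) : Q.isLocal (Limits.Sigma.map π) := by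
  intro Y hY
  refine ⟨fun t t' htt' => Sigma.hom_ext _ _ fun i => (h i Y hY).1 ?_, fun s => ?_⟩
  · simpa using Sigma.ι X i ≫= htt'
  · choose u hu using fun i => (h i Y hY).2 (Sigma.ι X i ≫ s)
    exact ⟨Limits.Sigma.desc u, Sigma.hom_ext _ _ fun i => by simpa using hu i⟩

end

end ObjectProperty

variable {C : Type*} [Category* C] [HasZeroObject C] [Preadditive C] [HasShift C ℤ]
  [∀ n : ℤ, (CategoryTheory.shiftFunctor C n).Additive] [Pretriangulated C]

lemma Pretriangulated.Triangle.yoneda_exact₁ (T : Triangle C) (hT : T ∈ distTriang C) {X : C}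
    (f : T.obj₁⟦(1 : ℤ)⟧ ⟶ X) (hf : T.mor₃ ≫ f = 0) :
    ∃ g : T.obj₂⟦(1 : ℤ)⟧ ⟶ X, f = T.mor₁⟦(1 : ℤ)⟧' ≫ g := by
  obtain ⟨g, hg⟩ := T.rotate.yoneda_exact₃ (rot_of_distTriang _ hT) f hf
  exact ⟨-g, hg.trans ((Preadditive.neg_comp _ _).trans (Preadditive.comp_neg _ _).symm)⟩

section FiveLemma

variable {T₁ T₂ : Triangle C} (φ : T₁ ⟶ T₂) (hT₁ : T₁ ∈ distTriang C) (hT₂ : T₂ ∈ distTriang C)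
  {Y : C}
include hT₁ hT₂

lemma Pretriangulated.injective_comp_hom₃
    (h₂ : Function.Injective (φ.hom₂ ≫ · : (T₂.obj₂ ⟶ Y) → _))
    (h₁' : Function.Injective (φ.hom₁⟦(1 : ℤ)⟧' ≫ · : (T₂.obj₁⟦(1 : ℤ)⟧ ⟶ Y) → _))
    (h₂' : Function.Surjective (φ.hom₂⟦(1 : ℤ)⟧' ≫ · : (T₂.obj₂⟦(1 : ℤ)⟧ ⟶ Y) → _)) :
    Function.Injective (φ.hom₃ ≫ · : (T₂.obj₃ ⟶ Y) → _) := by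
  refine (injective_iff_map_eq_zero (Preadditive.leftComp Y φ.hom₃)).2 fun t ht => ?_
  replace ht : φ.hom₃ ≫ t = 0 := ht
  have h₂t : T₂.mor₂ ≫ t = 0 := h₂ (by simp [← φ.comm₂_assoc, ht])
  obtain ⟨η, rfl⟩ := T₂.yoneda_exact₃ hT₂ t h₂t
  obtain ⟨θ, hθ⟩ := T₁.yoneda_exact₁ hT₁ (φ.hom₁⟦1⟧' ≫ η) (by rw [reassoc_of% φ.comm₃, ht])
  obtain ⟨θ', rfl⟩ := h₂' θ
  have hη : η = T₂.mor₁⟦(1 : ℤ)⟧' ≫ θ' := h₁' (by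
    dsimp only at hθ ⊢
    rw [hθ, ← Functor.map_comp_assoc, φ.comm₁, Functor.map_comp_assoc])
  rw [hη, comp_distTriang_mor_zero₃₁_assoc _ hT₂, zero_comp]

lemma Pretriangulated.surjective_comp_hom₃
    (h₁ : Function.Injective (φ.hom₁ ≫ · : (T₂.obj₁ ⟶ Y) → _))
    (h₂ : Function.Surjective (φ.hom₂ ≫ · : (T₂.obj₂ ⟶ Y) → _))
    (h₁' : Function.Surjective (φ.hom₁⟦(1 : ℤ)⟧' ≫ · : (T₂.obj₁⟦(1 : ℤ)⟧ ⟶ Y) → _)) :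
    Function.Surjective (φ.hom₃ ≫ · : (T₂.obj₃ ⟶ Y) → _) := by
  intro χ
  obtain ⟨β, hβ⟩ := h₂ (T₁.mor₂ ≫ χ)
  dsimp only at hβ
  have hβ₁ : T₂.mor₁ ≫ β = 0 := h₁ (by
    simp [← φ.comm₁_assoc, hβ, comp_distTriang_mor_zero₁₂_assoc _ hT₁])
  obtain ⟨ζ, rfl⟩ := T₂.yoneda_exact₂ hT₂ β hβ₁
  obtain ⟨ξ, hξ⟩ := T₁.yoneda_exact₃ hT₁ (χ - φ.hom₃ ≫ ζ)
    (by rw [Preadditive.comp_sub, ← hβ, φ.comm₂_assoc, sub_self])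
  obtain ⟨ξ', rfl⟩ := h₁' ξ
  refine ⟨ζ + T₂.mor₃ ≫ ξ', ?_⟩
  dsimp only at hξ ⊢
  rw [Preadditive.comp_add, ← φ.comm₃_assoc, ← hξ, add_sub_cancel]

lemma ObjectProperty.isLocal_hom₃ {Q : ObjectProperty C} [Q.IsStableUnderShift ℤ]
    (h₁ : Q.isLocal φ.hom₁) (h₂ : Q.isLocal φ.hom₂) : Q.isLocal φ.hom₃ := fun Y hY =>
  ⟨injective_comp_hom₃ φ hT₁ hT₂ (h₂ Y hY).1 (h₁.shift 1 Y hY).1 (h₂.shift 1 Y hY).2,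
    surjective_comp_hom₃ φ hT₁ hT₂ (h₁ Y hY).1 (h₂ Y hY).2 (h₁.shift 1 Y hY).2⟩

end FiveLemma

namespace ObjectProperty

lemma rightOrthogonal_obj₃_of_isColocal {P : ObjectProperty C} [P.IsStableUnderShift ℤ]
    (T : Triangle C) (hT : T ∈ distTriang C) (h : P.isColocal T.mor₁) :
    P.rightOrthogonal T.obj₃ := by
  intro W w hW
  have hw : w ≫ T.mor₃ = 0 :=
    (h.shift (1 : ℤ) W hW).1 (by simp [comp_distTriang_mor_zero₃₁ _ hT])
  obtain ⟨v, rfl⟩ := T.coyoneda_exact₃ hT w hw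
  obtain ⟨u, rfl⟩ := (h W hW).2 v
  simp [comp_distTriang_mor_zero₁₂ _ hT]

lemma extensionProduct_rightOrthogonal_of_isLeftAdjoint (P : ObjectProperty C)
    [P.IsStableUnderShift ℤ] [P.ι.IsLeftAdjoint] (X : C) :
    extensionProduct P P.rightOrthogonal X := by
  let adj := Adjunction.ofIsLeftAdjoint P.ι
  obtain ⟨Z, g, h, hT⟩ := distinguished_cocone_triangle (adj.counit.app X)
  refine ⟨_, Z, _, g, h, hT, (P.ι.rightAdjoint.obj X).property,
    rightOrthogonal_obj₃_of_isColocal _ hT fun W hW => ?_⟩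
  exact isColocal_adj_counit_app adj X W ⟨⟨W, hW⟩, rfl⟩

lemma isLocal_rightOrthogonal_mor₂ {P : ObjectProperty C} [P.IsTriangulated]
    (T : Triangle C) (hT : T ∈ distTriang C) (h₁ : P T.obj₁) :
    P.rightOrthogonal.isLocal T.mor₂ :=
  (le_isLocal_iff _ _).2 (isLocal_trW P).ge _ (trW.mk' P hT h₁)

section Decomposition

variable {P P' : ObjectProperty C} [P.IsTriangulated] [P'.IsClosedUnderIsomorphisms]

lemma rightOrthogonal_le_of_forall_extensionProduct (h : ∀ X, extensionProduct P P' X)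
    (hP' : P' ≤ P.rightOrthogonal) : P.rightOrthogonal ≤ P' := by
  intro Y hY
  obtain ⟨X', X'', f, g, k, hT, h₁, h₂⟩ := h Y
  have := (P.rightOrthogonal.isLocal_iff_isIso g hY (hP' _ h₂)).1
    (isLocal_rightOrthogonal_mor₂ _ hT h₁)
  exact P'.prop_of_iso (asIso g).symm h₂

variable (hP' : P' ≤ P.rightOrthogonal) (hP : ∀ X, extensionProduct P P.rightOrthogonal X)
include hP' hP

lemma extensionProduct_iff_exists_isLocal (X : C) :
    extensionProduct P P' X ↔ ∃ (Z : C) (π : X ⟶ Z), P.rightOrthogonal.isLocal π ∧ P' Z := by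
  constructor
  · rintro ⟨Y, Z, f, g, h, hT, hY, hZ⟩
    exact ⟨Z, g, isLocal_rightOrthogonal_mor₂ _ hT hY, hZ⟩
  · rintro ⟨Z, π, hπ, hZ⟩
    obtain ⟨Y, Z₀, f, g, h, hT, hY, hZ₀⟩ := hP X
    obtain ⟨e⟩ := (isLocal_rightOrthogonal_mor₂ _ hT hY).nonempty_iso hπ hZ₀ (hP' _ hZ)
    exact ⟨Y, Z₀, f, g, h, hT, hY, P'.prop_of_iso e.symm hZ⟩

lemma extensionProduct_obj₃ [P'.IsTriangulatedClosed₃] (T : Triangle C) (hT : T ∈ distTriang C)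
    (h₁ : extensionProduct P P' T.obj₁) (h₂ : extensionProduct P P' T.obj₂) :
    extensionProduct P P' T.obj₃ := by
  rw [extensionProduct_iff_exists_isLocal hP' hP] at h₁ h₂ ⊢
  obtain ⟨Z₁, π₁, hπ₁, hZ₁⟩ := h₁
  obtain ⟨Z₂, π₂, hπ₂, hZ₂⟩ := h₂
  obtain ⟨u, hu⟩ := (hπ₁ Z₂ (hP' _ hZ₂)).2 (T.mor₁ ≫ π₂)
  obtain ⟨Z₃, hZ₃, v, w, hT'⟩ := P'.distinguished_cocone_triangle u hZ₁ hZ₂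
  obtain ⟨π₃, hc₂, hc₃⟩ := complete_distinguished_triangle_morphism T _ hT hT' π₁ π₂ hu.symm
  let φ := Triangle.homMk T (Triangle.mk u v w) π₁ π₂ π₃ hu.symm hc₂ hc₃
  exact ⟨Z₃, π₃, isLocal_hom₃ φ hT hT' hπ₁ hπ₂, hZ₃⟩

lemma extensionProduct_sigmaObj {ι : Type*} [HasCoproductsOfShape ι C]
    (hσ : ∀ Z : ι → C, (∀ i, P' (Z i)) → P' (∐ Z))
    (X : ι → C) (hX : ∀ i, extensionProduct P P' (X i)) : extensionProduct P P' (∐ X) := by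
  simp_rw [extensionProduct_iff_exists_isLocal hP' hP] at hX ⊢
  choose Z π hπ hZ using hX
  exact ⟨∐ Z, Limits.Sigma.map π, isLocal_sigmaMap π hπ, hσ Z hZ⟩

end Decomposition

end ObjectProperty

end CategoryTheory

section Localizing

variable {T : Type u} [Category.{v} T] [HasZeroObject T] [Preadditive T] [HasShift T ℤ]
  [∀ n : ℤ, (shiftFunctor T n).Additive] [Pretriangulated T] {S S' : Set T}

lemma IsLocalizingSet.isClosedUnderIsomorphisms (hS : IsLocalizingSet S) :
    ObjectProperty.IsClosedUnderIsomorphisms (· ∈ S) :=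
  ⟨fun e hX => hS.2.1 ⟨e⟩ hX⟩

lemma IsLocalizingSet.isTriangulated (hS : IsLocalizingSet S) :
    ObjectProperty.IsTriangulated (· ∈ S) := by
  obtain ⟨⟨Z, hZ, hZ₀⟩, -, hshift, htri, -⟩ := id hS
  have := hS.isClosedUnderIsomorphisms
  have : ObjectProperty.IsStableUnderShift (· ∈ S) ℤ := ⟨fun a => ⟨fun X hX => hshift X hX a⟩⟩
  have : ObjectProperty.IsTriangulatedClosed₃ (· ∈ S) := .mk' htri
  exact { exists_zero := ⟨Z, hZ₀, hZ⟩, toIsTriangulatedClosed₂ := .of_isTriangulatedClosed₃ }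

lemma isLocalizingSet_extensionProduct [HasCoproducts.{v} T]
    (hS : IsLocalizingSet S) (hS' : IsLocalizingSet S')
    (hS'S : (· ∈ S') ≤ ObjectProperty.rightOrthogonal (· ∈ S))
    [(ObjectProperty.ι fun X => X ∈ S).IsLeftAdjoint] :
    IsLocalizingSet {X | ObjectProperty.extensionProduct (· ∈ S) (· ∈ S') X} := by
  have := hS.isTriangulated
  have := hS'.isTriangulated
  have := hS'.isClosedUnderIsomorphisms
  have hP := ObjectProperty.extensionProduct_rightOrthogonal_of_isLeftAdjoint (· ∈ S)
  let L := ObjectProperty.extensionProduct (· ∈ S) (· ∈ S')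
  obtain ⟨Z, hZ, hZ₀⟩ := ObjectProperty.exists_prop_of_containsZero (· ∈ S)
  refine ⟨⟨Z, ObjectProperty.le_extensionProduct_left _ _ hZ₀, hZ⟩,
    fun X Y ⟨e⟩ hX => L.prop_of_iso e hX, fun X hX n => L.le_shift n X hX,
    fun D hD h₁ h₂ => ObjectProperty.extensionProduct_obj₃ hS'S hP D hD h₁ h₂,
    fun ι X c hc hX => ?_⟩
  refine L.prop_of_iso (hc.coconePointUniqueUpToIso (colimit.isColimit _)).symm ?_
  exact ObjectProperty.extensionProduct_sigmaObj hS'S hP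
    (fun Z hZ => hS'.2.2.2.2 ι Z _ (coproductIsCoproduct Z) hZ) X hX

end Localizing

/-- Let `T` be a triangulated category with coproducts, `S` a localizing subcategory
whose inclusion admits a right adjoint, and `S'` a localizing subcategory contained in
`S^⊥` such that the smallest localizing subcategory containing `S ∪ S'` is all of `T`.
Then `S^⊥ = S'`, and every object `X` of `T` fits into a distinguished triangle
`X' → X → X'' → ΣX'` with `X' ∈ S` and `X'' ∈ S'`. -/
theorem stmt14 {T : Type u} [Category.{v} T] [HasZeroObject T] [Preadditive T]
    [HasShift T ℤ] [∀ n : ℤ, (shiftFunctor T n).Additive] [Pretriangulated T]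
    [HasCoproducts.{v} T]
    (S S' : Set T) (hS : IsLocalizingSet S) (hS' : IsLocalizingSet S')
    (hadj : (ObjectProperty.ι fun X => X ∈ S).IsLeftAdjoint)
    (horth : ∀ Y ∈ S', ∀ X ∈ S, ∀ f : X ⟶ Y, f = 0)
    (hgen : ∀ (X : T) (L : Set T), IsLocalizingSet L → S ⊆ L → S' ⊆ L → X ∈ L) :
    (∀ Y : T, (∀ X ∈ S, ∀ f : X ⟶ Y, f = 0) → Y ∈ S') ∧
    (∀ X : T, ∃ (X' X'' : T) (f : X' ⟶ X) (g : X ⟶ X'') (h : X'' ⟶ X'⟦(1 : ℤ)⟧),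
      (Triangle.mk f g h ∈ distTriang T) ∧ X' ∈ S ∧ X'' ∈ S') := by
  have := hS.isTriangulated
  have := hS'.isTriangulated
  have := hS'.isClosedUnderIsomorphisms
  have hS'S : (· ∈ S') ≤ ObjectProperty.rightOrthogonal (· ∈ S) :=
    fun Y hY X f hX => horth Y hY X hX f
  have hdecomp (X : T) : ObjectProperty.extensionProduct (· ∈ S) (· ∈ S') X :=
    hgen X _ (isLocalizingSet_extensionProduct hS hS' hS'S)
      (ObjectProperty.le_extensionProduct_left _) (ObjectProperty.le_extensionProduct_right _)
  exact ⟨fun Y hY => ObjectProperty.rightOrthogonal_le_of_forall_extensionProduct hdecomp hS'S Y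
    fun X f hX => hY X hX f, hdecomp⟩
end
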